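/- For integers J ≥ 2 and a probability density p on (0,∞) satisfying sup_{t>0} t·p(t) ≤ c₁·J, and for any r > 0, the integral ∫₀^∞ log|1 − y/r| · p(y) dy ≥ −4c₁ − (4c₁ + 1)·log J. -/

import Mathlib

/-!
Off the window `|1 - y / r| ≤ ε` the integrand is at least `log ε · p y`. On the window `p ≤ C`,
and as the logarithm is nonpositive there, the integrand is at least
`log ε · p y + C · log |1 - y / r|`; the last term integrates to `2 r C (ε log ε - ε)` over the
window. Taking `ε = 1 / J` and `C = 2 c₁ J / r` (valid since `y ≥ r / 2` on the window) gives the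
bound.
-/

open MeasureTheory Set Real

theorem abs_one_sub_div_le_iff {r ε y : ℝ} (hr : 0 < r) :
    |1 - y / r| ≤ ε ↔ y ∈ Icc (r * (1 - ε)) (r * (1 + ε)) := by
  rw [abs_le, mem_Icc, neg_le_sub_iff_le_add, sub_le_comm, div_le_iff₀ hr, le_div_iff₀ hr]
  constructor <;> rintro ⟨h₁, h₂⟩ <;> constructor <;> linarith

theorem intervalIntegrable_log_abs_one_sub_div {r : ℝ} (hr : r ≠ 0) (a b : ℝ) :
    IntervalIntegrable (fun y ↦ log |1 - y / r|) volume a b := by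
  have hlog := intervalIntegral.intervalIntegrable_log' (a := 1 - a / r) (b := 1 - b / r)
  have := (hlog.comp_sub_left 1).comp_mul_left (c := r⁻¹)
  simp only [log_abs]
  convert this using 1
  · ext y; ring_nf
  all_goals simp [hr]

theorem integral_log_abs_one_sub_div {r : ℝ} (hr : r ≠ 0) (ε : ℝ) :
    ∫ y in r * (1 - ε)..r * (1 + ε), log |1 - y / r| = 2 * r * (ε * log ε - ε) := by
  rw [intervalIntegral.integral_comp_div (fun x ↦ log |1 - x|) hr, mul_div_cancel_left₀ _ hr,
    mul_div_cancel_left₀ _ hr, intervalIntegral.integral_comp_sub_left (fun x ↦ log |x|)]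
  simp only [log_abs, sub_add_cancel_left, sub_sub_cancel, smul_eq_mul]
  rw [integral_log, log_neg_eq_log]
  ring

theorem log_mul_add_ite_le {ε q C x : ℝ} (hε : 0 < ε) (hε1 : ε ≤ 1) (hq : 0 ≤ q)
    (hqC : |x| ≤ ε → q ≤ C) :
    log ε * q + C * (if |x| ≤ ε then log |x| else 0) ≤ log |x| * q := by
  split_ifs with hx
  · have hlogx : log |x| ≤ 0 := log_nonpos (abs_nonneg x) (hx.trans hε1)
    have hlogε : log ε ≤ 0 := log_nonpos hε.le hε1
    nlinarith [hqC hx, mul_nonpos_of_nonpos_of_nonneg hlogε hq]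
  · have := log_le_log hε (not_le.mp hx).le
    nlinarith

theorem le_setIntegral_log_abs_one_sub_div_mul {p : ℝ → ℝ} {r ε C : ℝ} (hr : 0 < r)
    (hε : 0 < ε) (hε1 : ε < 1) (hp : ∀ t, 0 ≤ p t) (hpint : IntegrableOn p (Ioi (0 : ℝ)))
    (hpC : ∀ y ∈ Icc (r * (1 - ε)) (r * (1 + ε)), p y ≤ C)
    (hf : IntegrableOn (fun y ↦ log |1 - y / r| * p y) (Ioi (0 : ℝ))) :
    log ε * (∫ y in Ioi (0 : ℝ), p y) + C * (2 * r * (ε * log ε - ε)) ≤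
      ∫ y in Ioi (0 : ℝ), log |1 - y / r| * p y := by
  set I := Icc (r * (1 - ε)) (r * (1 + ε))
  have hIpos : I ⊆ Ioi 0 := fun y hy ↦ lt_of_lt_of_le (by nlinarith) hy.1
  have hIle : r * (1 - ε) ≤ r * (1 + ε) := by nlinarith
  have hlogI : IntegrableOn (fun y ↦ log |1 - y / r|) I :=
    (integrableOn_Icc_iff_integrableOn_Ioc).mpr <| (intervalIntegrable_iff_integrableOn_Ioc_of_le
      hIle).mp (intervalIntegrable_log_abs_one_sub_div hr.ne' _ _)
  have hlogI' : IntegrableOn (fun y ↦ C * I.indicator (fun y ↦ log |1 - y / r|) y) (Ioi 0) :=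
    ((hlogI.integrable_indicator measurableSet_Icc).const_mul C).integrableOn
  calc log ε * (∫ y in Ioi (0 : ℝ), p y) + C * (2 * r * (ε * log ε - ε))
      = ∫ y in Ioi (0 : ℝ), (log ε * p y + C * I.indicator (fun y ↦ log |1 - y / r|) y) := by
        rw [integral_add (hpint.const_mul _) hlogI', integral_const_mul, integral_const_mul,
          setIntegral_indicator measurableSet_Icc, inter_eq_right.mpr hIpos,
          integral_Icc_eq_integral_Ioc, ← intervalIntegral.integral_of_le hIle,
          integral_log_abs_one_sub_div hr.ne']
    _ ≤ ∫ y in Ioi (0 : ℝ), log |1 - y / r| * p y := by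
        refine setIntegral_mono_on ((hpint.const_mul _).add hlogI') hf measurableSet_Ioi
          fun y _ ↦ ?_
        simp only [I, indicator_apply, ← abs_one_sub_div_le_iff hr]
        exact log_mul_add_ite_le hε hε1.le (hp y) fun hy ↦
          hpC y ((abs_one_sub_div_le_iff hr).mp hy)

theorem log_integral_lower_bound_general
    (J : ℕ) (hJ : 2 ≤ J) (c₁ : ℝ) (hc₁ : 0 < c₁)
    (p : ℝ → ℝ) (hppos : ∀ t, 0 ≤ p t)
    (hpdens : ∫ t in Set.Ioi (0:ℝ), p t = 1)
    (hpsup : ∀ t > (0:ℝ), t * p t ≤ c₁ * J)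
    (r : ℝ) (hr : 0 < r) :
    ∫ y in Set.Ioi (0:ℝ), Real.log |1 - y / r| * p y
      ≥ -4 * c₁ - (4 * c₁ + 1) * Real.log J := by
  have hJ2 : (2 : ℝ) ≤ J := by exact_mod_cast hJ
  have hJinv : (J : ℝ)⁻¹ ≤ 1 / 2 := by rw [inv_le_comm₀ (by positivity) (by norm_num)]; linarith
  have hlogJ : 0 ≤ log J := log_nonneg (by linarith)
  by_cases hf : IntegrableOn (fun y ↦ log |1 - y / r| * p y) (Ioi 0)
  swap
  · rw [integral_undef hf]
    nlinarith
  have hpint : IntegrableOn p (Ioi 0) := Integrable.of_integral_ne_zero (by simp [hpdens])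
  have hpC : ∀ y ∈ Icc (r * (1 - (J : ℝ)⁻¹)) (r * (1 + (J : ℝ)⁻¹)), p y ≤ 2 * c₁ * J / r := by
    intro y hy
    have hry : r ≤ 2 * y := by nlinarith [hy.1]
    rw [le_div_iff₀ hr]
    nlinarith [hpsup y (by linarith), mul_le_mul_of_nonneg_left hry (hppos y)]
  have key := le_setIntegral_log_abs_one_sub_div_mul hr (by positivity) (by linarith) hppos
    hpint hpC hf
  have hvalue : 2 * c₁ * J / r * (2 * r * ((J : ℝ)⁻¹ * log (J : ℝ)⁻¹ - (J : ℝ)⁻¹)) =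
      -4 * c₁ - 4 * c₁ * log J := by
    rw [log_inv]; field_simp; ring
  rw [hpdens, hvalue, log_inv] at key
  linarith

/-- lower bound on ∫ log|1 − y/r| p(y) dy for a density p on (0,∞)
with sup_{t>0} t·p(t) ≤ c₁ J. -/
theorem log_integral_lower_bound
    (J : ℕ) (hJ : 2 ≤ J) (c₁ : ℝ) (hc₁ : 0 < c₁)
    (p : ℝ → ℝ) (hpmeas : Measurable p) (hppos : ∀ t, 0 ≤ p t)
    (hpdens : ∫ t in Set.Ioi (0:ℝ), p t = 1)
    (hpsup : ∀ t > (0:ℝ), t * p t ≤ c₁ * J)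
    (r : ℝ) (hr : 0 < r) :
    ∫ y in Set.Ioi (0:ℝ), Real.log |1 - y / r| * p y
      ≥ -4 * c₁ - (4 * c₁ + 1) * Real.log J :=
  log_integral_lower_bound_general J hJ c₁ hc₁ p hppos hpdens hpsup r hr
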